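/- If a white vertex v in the residual graph G^D has at least three white neighbors, then playing v decreases the potential f(G^D) = 5|W| + 3|B| by at least 11. -/

import Mathlib

open SimpleGraph
open scoped Classical

/-- The closed neighborhood N[v] of a vertex. -/
def cN {V : Type*} (G : SimpleGraph V) (v : V) : Set V := insert v (G.neighborSet v)

/-- Closed neighborhood N[D] of a set of vertices. -/
noncomputable def nbhd {V : Type*} (G : SimpleGraph V) (D : Set V) : Set V :=
  ⋃ d ∈ D, cN G d

/-- A vertex is white in the residual graph G^D if it is not dominated. -/
def isWhite {V : Type*} (G : SimpleGraph V) (D : Set V) (v : V) : Prop := v ∉ nbhd G D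

/-- A vertex is red in G^D if its whole closed neighborhood is dominated. -/
def isRed {V : Type*} (G : SimpleGraph V) (D : Set V) (v : V) : Prop :=
  cN G v ⊆ nbhd G D

/-- A vertex is blue in G^D if it is dominated but has an undominated neighbor. -/
def isBlue {V : Type*} (G : SimpleGraph V) (D : Set V) (v : V) : Prop :=
  v ∈ nbhd G D ∧ ¬ isRed G D v

/-- The white-degree of a vertex: its number of white neighbors. -/
noncomputable def whiteDeg {V : Type*} [Fintype V] (G : SimpleGraph V) (D : Set V) (v : V) : ℕ :=
  (Finset.univ.filter fun u => G.Adj v u ∧ isWhite G D u).card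

/-- Potential function: 5 per white vertex, `wB` per blue vertex, 0 per red vertex. -/
noncomputable def pot {V : Type*} [Fintype V] (G : SimpleGraph V) (D : Set V) (wB : ℝ) : ℝ :=
  5 * ((Finset.univ.filter fun u => isWhite G D u).card : ℝ)
  + wB * ((Finset.univ.filter fun u => isBlue G D u).card : ℝ)

/-!
Playing `v` dominates exactly the new vertices `N[v]`. So every vertex white after the move was
white before and lies outside `N[v]`: the white count drops by `1 + k`, where `k` is the number of
white neighbours of `v`. A vertex blue after the move was either blue before (domination only
grows, so redness persists) or one of those `k` white neighbours (`v` itself turns red). Hence the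
potential drops by at least `5 (1 + k) - 3 k = 5 + 2 k ≥ 11`.
-/

open Finset

section Residual

variable {V : Type*} (G : SimpleGraph V)

lemma nbhd_union_singleton (D : Set V) (v : V) :
    nbhd G (D ∪ {v}) = nbhd G D ∪ cN G v := by
  rw [nbhd, Set.biUnion_union, Set.biUnion_singleton, nbhd]

lemma nbhd_mono {D D' : Set V} (h : D ⊆ D') : nbhd G D ⊆ nbhd G D' :=
  Set.biUnion_subset_biUnion_left h

lemma isRed.mono {D D' : Set V} {u : V} (hu : isRed G D u) (h : D ⊆ D') : isRed G D' u :=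
  hu.trans (nbhd_mono G h)

lemma isRed_union_singleton_self (D : Set V) (v : V) : isRed G (D ∪ {v}) v := by
  rw [isRed, nbhd_union_singleton]
  exact Set.subset_union_right

lemma isWhite_union_singleton_iff {D : Set V} {v u : V} :
    isWhite G (D ∪ {v}) u ↔ isWhite G D u ∧ u ≠ v ∧ ¬ G.Adj v u := by
  rw [isWhite, isWhite, nbhd_union_singleton]
  simp only [cN, Set.mem_union, Set.mem_insert_iff, mem_neighborSet]
  tauto

lemma isBlue_union_singleton {D : Set V} {v u : V} (hu : isBlue G (D ∪ {v}) u) :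
    isBlue G D u ∨ (G.Adj v u ∧ isWhite G D u) := by
  obtain ⟨hdom, hnred⟩ := hu
  by_cases hw : isWhite G D u
  · have huv : u ≠ v := by
      rintro rfl
      exact hnred (isRed_union_singleton_self G D u)
    have hmem : u ∈ cN G v := by
      rw [nbhd_union_singleton] at hdom
      exact hdom.resolve_left hw
    exact Or.inr ⟨(Set.mem_insert_iff.mp hmem).resolve_left huv, hw⟩
  · exact Or.inl ⟨not_not.mp hw, fun hred => hnred (hred.mono G Set.subset_union_left)⟩

end Residual

section Potential

variable {V : Type*} [Fintype V] (G : SimpleGraph V) (D : Set V) (v : V)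

lemma card_white_union_singleton_add_whiteDeg_lt (hv : isWhite G D v) :
    #{u | isWhite G (D ∪ {v}) u} + whiteDeg G D v < #{u | isWhite G D u} := by
  set S : Finset V := {u | G.Adj v u ∧ isWhite G D u}
  set W : Finset V := {u | isWhite G D u}
  have hvS : v ∉ S := by simp [S]
  have hsub : insert v S ⊆ W := by
    intro u
    simp only [S, W, mem_insert, mem_filter, mem_univ, true_and]
    rintro (rfl | ⟨-, hu⟩) <;> assumption
  have hafter : ({u | isWhite G (D ∪ {v}) u} : Finset V) ⊆ W \ insert v S := by
    intro u hu
    obtain ⟨hw, huv, hnadj⟩ := (isWhite_union_singleton_iff G).mp (mem_filter.mp hu).2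
    simp [S, W, hw, huv, hnadj]
  have hle := card_le_card hafter
  have hsplit := card_sdiff_add_card_eq_card hsub
  rw [card_insert_of_notMem hvS] at hsplit
  change _ + #S < #W
  omega

lemma card_blue_union_singleton_le :
    #{u | isBlue G (D ∪ {v}) u} ≤ #{u | isBlue G D u} + whiteDeg G D v := by
  refine (card_le_card fun u hu => ?_).trans (card_union_le _ _)
  simpa using isBlue_union_singleton G (mem_filter.mp hu).2

lemma pot_union_singleton_le {wB : ℝ} (hwB : 0 ≤ wB) (hv : isWhite G D v) :
    pot G (D ∪ {v}) wB ≤ pot G D wB - 5 - (5 - wB) * whiteDeg G D v := by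
  have hW : (#{u | isWhite G (D ∪ {v}) u} : ℝ) + whiteDeg G D v + 1 ≤ #{u | isWhite G D u} := by
    exact_mod_cast card_white_union_singleton_add_whiteDeg_lt G D v hv
  have hB : (#{u | isBlue G (D ∪ {v}) u} : ℝ) ≤ #{u | isBlue G D u} + whiteDeg G D v := by
    exact_mod_cast card_blue_union_singleton_le G D v
  have hB' := mul_le_mul_of_nonneg_left hB hwB
  unfold pot
  linarith

end Potential

/-- A white vertex with at least three white neighbors decreases the potential
f = 5|W| + 3|B| by at least 11 when played. -/
theorem stmt_8 {V : Type*} [Fintype V] (G : SimpleGraph V) (D : Set V) (v : V)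
    (hv : isWhite G D v) (h3 : 3 ≤ whiteDeg G D v) :
    pot G (D ∪ {v}) 3 ≤ pot G D 3 - 11 := by
  have hk : (3 : ℝ) ≤ whiteDeg G D v := by exact_mod_cast h3
  linarith [pot_union_singleton_le G D v (by norm_num : (0 : ℝ) ≤ 3) hv]
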